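/- arXiv:1507.00293 — 2 statements merged into one kernel-verified Lean document; each statement's English description precedes it below -/
import Mathlib

section
/- Let U ⊆ ℂ be open and φ₁, φ₂, φ₃ : ℂ → ℂ be holomorphic on U with φ₁² + φ₂² + φ₃² = 0 on U and λ := (|φ₁|² + |φ₂|² + |φ₃|²)/2 > 0 on U. Define real-valued functions α := −Im(φ₂·conj(φ₃))/λ, β := −Im(φ₃·conj(φ₁))/λ, γ := −Im(φ₁·conj(φ₂))/λ on U (equivalently, −2iλα = φ₂·conj(φ₃) − φ₃·conj(φ₂) and cyclically). Then at every z ∈ U, φ₂(z)·∂̄α(z) = φ₁(z)·∂̄β(z) and φ₃(z)·∂̄β(z) = φ₂(z)·∂̄γ(z); that is, φ₁⁻¹ ∂α/∂z̄ = φ₂⁻¹ ∂β/∂z̄ = φ₃⁻¹ ∂γ/∂z̄ wherever the φ_j are nonzero. -/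
/-!
Write `φ = (φ₁, φ₂, φ₃)` and `G = φ ⬝ φ̄ = 2λ`, so that the Gauss map is `N = i (φ ⨯ φ̄) / G`.
Since the `φⱼ` are holomorphic, `∂̄φⱼ = 0` and `∂̄φ̄ⱼ = conj φⱼ'`, hence
`G² ∂̄N = i (G (φ ⨯ φ̄') - (φ ⬝ φ̄') (φ ⨯ φ̄))`. As `φ ⬝ φ = 0`, the vector triple product
gives `φ ⨯ (φ ⨯ x) = (φ ⬝ x) φ`, so `φ ⨯ ∂̄N = 0`: the vector `∂̄N` is parallel to `φ`.
-/

open Complex ComplexConjugate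

/-- The Wirtinger derivative with respect to `z̄` of a map `ℂ → ℂ`,
viewed as a map between real vector spaces. -/
noncomputable def dbar (h : ℂ → ℂ) (z : ℂ) : ℂ :=
  (1 / 2) * (fderiv ℝ h z 1 + Complex.I • fderiv ℝ h z Complex.I)

open Matrix

theorem DifferentiableAt.fderiv_real_apply {f : ℂ → ℂ} {z : ℂ} (hf : DifferentiableAt ℂ f z)
    (v : ℂ) : fderiv ℝ f z v = deriv f z * v := by
  simp [hf.hasDerivAt.complexToReal_fderiv.fderiv]

section Wirtinger

variable {f g : ℂ → ℂ} {z : ℂ}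

theorem dbar_add (hf : DifferentiableAt ℝ f z) (hg : DifferentiableAt ℝ g z) :
    dbar (fun w => f w + g w) z = dbar f z + dbar g z := by
  simp only [dbar, fderiv_fun_add hf hg, _root_.add_apply, smul_eq_mul]
  ring

theorem dbar_sub (hf : DifferentiableAt ℝ f z) (hg : DifferentiableAt ℝ g z) :
    dbar (fun w => f w - g w) z = dbar f z - dbar g z := by
  simp only [dbar, fderiv_fun_sub hf hg, _root_.sub_apply, smul_eq_mul]
  ring

theorem dbar_const_mul (c : ℂ) (hf : DifferentiableAt ℝ f z) :
    dbar (fun w => c * f w) z = c * dbar f z := by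
  simp only [dbar, fderiv_const_mul hf, _root_.smul_apply, smul_eq_mul]
  ring

theorem dbar_mul (hf : DifferentiableAt ℝ f z) (hg : DifferentiableAt ℝ g z) :
    dbar (fun w => f w * g w) z = f z * dbar g z + g z * dbar f z := by
  simp only [dbar, fderiv_fun_mul hf hg, _root_.add_apply, _root_.smul_apply, smul_eq_mul]
  ring

theorem DifferentiableAt.dbar_eq_zero (hf : DifferentiableAt ℂ f z) : dbar f z = 0 := by
  simp only [dbar, hf.fderiv_real_apply, smul_eq_mul]
  linear_combination deriv f z / 2 * I_sq

theorem DifferentiableAt.dbar_conj (hf : DifferentiableAt ℂ f z) :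
    dbar (fun w => conj (f w)) z = conj (deriv f z) := by
  have : fderiv ℝ (fun w => conj (f w)) z = conjCLE.toContinuousLinearMap ∘L fderiv ℝ f z :=
    conjCLE.comp_fderiv
  simp only [dbar, this, ContinuousLinearMap.comp_apply, hf.fderiv_real_apply,
    ContinuousLinearEquiv.coe_coe, conjCLE_apply, map_mul, conj_I, map_one, smul_eq_mul]
  linear_combination -conj (deriv f z) / 2 * I_sq

theorem DifferentiableAt.dbar_comp {φ : ℂ → ℂ} (hφ : DifferentiableAt ℂ φ (g z))
    (hg : DifferentiableAt ℝ g z) : dbar (fun w => φ (g w)) z = deriv φ (g z) * dbar g z := by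
  simp only [dbar, fderiv_fun_comp z hφ.real_of_complex hg, ContinuousLinearMap.comp_apply,
    hφ.fderiv_real_apply, smul_eq_mul]
  ring

theorem dbar_inv (hg : DifferentiableAt ℝ g z) (hg0 : g z ≠ 0) :
    dbar (fun w => (g w)⁻¹) z = -dbar g z / g z ^ 2 := by
  rw [(differentiableAt_inv hg0).dbar_comp hg, deriv_inv]
  ring

theorem dbar_div (hf : DifferentiableAt ℝ f z) (hg : DifferentiableAt ℝ g z) (hg0 : g z ≠ 0) :
    dbar (fun w => f w / g w) z = (g z * dbar f z - f z * dbar g z) / g z ^ 2 := by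
  simp only [div_eq_mul_inv (f _)]
  rw [dbar_mul (g := fun w => (g w)⁻¹) hf (hg.inv hg0), dbar_inv hg hg0]
  field_simp
  ring

theorem DifferentiableAt.dbar_mul_conj (hf : DifferentiableAt ℂ f z)
    (hg : DifferentiableAt ℂ g z) :
    dbar (fun w => f w * conj (g w)) z = f z * conj (deriv g z) := by
  rw [dbar_mul hf.real_of_complex (by fun_prop), hg.dbar_conj, hf.dbar_eq_zero]
  ring

end Wirtinger

theorem ofReal_neg_im_mul_conj_div (p q : ℂ) (r : ℝ) :
    ((-((p * conj q).im / r) : ℝ) : ℂ) = I * (p * conj q - q * conj p) / (2 * r) := by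
  have : q * conj p = conj (p * conj q) := by simp [mul_comm]
  rw [this, sub_conj]
  push_cast
  linear_combination -((p * conj q).im / r) * I_sq

theorem dbar_gaussMapComponent {p q G : ℂ → ℂ} {z : ℂ} (hp : DifferentiableAt ℂ p z)
    (hq : DifferentiableAt ℂ q z) (hG : DifferentiableAt ℝ G z) (hG0 : G z ≠ 0) :
    dbar (fun w => I * (p w * conj (q w) - q w * conj (p w)) / G w) z =
      I * (G z * (p z * conj (deriv q z) - q z * conj (deriv p z))
        - dbar G z * (p z * conj (q z) - q z * conj (p z))) / G z ^ 2 := by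
  rw [dbar_div (by fun_prop) hG hG0, dbar_const_mul _ (by fun_prop), dbar_sub (by fun_prop)
    (by fun_prop), hp.dbar_mul_conj hq, hq.dbar_mul_conj hp]
  ring

theorem cross_smul_cross_sub_eq_zero {R : Type*} [CommRing R] {u : Fin 3 → R}
    (hu : u ⬝ᵥ u = 0) (v w : Fin 3 → R) :
    u ⨯₃ ((u ⬝ᵥ w) • (u ⨯₃ v) - (u ⬝ᵥ v) • (u ⨯₃ w)) = 0 := by
  simp only [map_sub, map_smul, cross_cross_eq_smul_sub_smul', hu, zero_smul, sub_zero,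
    smul_smul, mul_comm, sub_self]

theorem gauss_map_dbar_proportionality
    (U : Set ℂ) (hU : IsOpen U) (φ₁ φ₂ φ₃ : ℂ → ℂ)
    (hφ₁ : DifferentiableOn ℂ φ₁ U) (hφ₂ : DifferentiableOn ℂ φ₂ U)
    (hφ₃ : DifferentiableOn ℂ φ₃ U)
    (hsum : ∀ z ∈ U, φ₁ z ^ 2 + φ₂ z ^ 2 + φ₃ z ^ 2 = 0)
    (lam : ℂ → ℝ)
    (hlam : lam = fun z =>
      (‖φ₁ z‖ ^ 2 + ‖φ₂ z‖ ^ 2 + ‖φ₃ z‖ ^ 2) / 2)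
    (hpos : ∀ z ∈ U, 0 < lam z)
    (α β γ : ℂ → ℂ)
    (hα : α = fun z => (↑(-((φ₂ z * conj (φ₃ z)).im / lam z)) : ℂ))
    (hβ : β = fun z => (↑(-((φ₃ z * conj (φ₁ z)).im / lam z)) : ℂ))
    (hγ : γ = fun z => (↑(-((φ₁ z * conj (φ₂ z)).im / lam z)) : ℂ)) :
    ∀ z ∈ U,
      φ₂ z * dbar α z = φ₁ z * dbar β z ∧ φ₃ z * dbar β z = φ₂ z * dbar γ z := by
  intro z hz
  have h₁ := hφ₁.differentiableAt (hU.mem_nhds hz)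
  have h₂ := hφ₂.differentiableAt (hU.mem_nhds hz)
  have h₃ := hφ₃.differentiableAt (hU.mem_nhds hz)
  set G : ℂ → ℂ := fun w => φ₁ w * conj (φ₁ w) + φ₂ w * conj (φ₂ w) + φ₃ w * conj (φ₃ w)
  have hG (w : ℂ) : 2 * (lam w : ℂ) = G w := by
    simp only [hlam, G, mul_conj, normSq_eq_norm_sq]
    push_cast
    ring
  have hG0 : G z ≠ 0 := by
    rw [← hG]
    exact_mod_cast (mul_pos two_pos (hpos z hz)).ne'
  have hdG : dbar G z = φ₁ z * conj (deriv φ₁ z) + φ₂ z * conj (deriv φ₂ z)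
      + φ₃ z * conj (deriv φ₃ z) := by
    rw [dbar_add (by fun_prop) (by fun_prop), dbar_add (by fun_prop) (by fun_prop),
      h₁.dbar_mul_conj h₁, h₂.dbar_mul_conj h₂, h₃.dbar_mul_conj h₃]
  have hcross := cross_smul_cross_sub_eq_zero (u := ![φ₁ z, φ₂ z, φ₃ z])
    (by simp only [vec3_dotProduct, cons_val_zero, cons_val_one, cons_val_two, tail_cons,
          head_cons]
        linear_combination hsum z hz)
    ![conj (deriv φ₁ z), conj (deriv φ₂ z), conj (deriv φ₃ z)]
    ![conj (φ₁ z), conj (φ₂ z), conj (φ₃ z)]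
  have hcross₀ := congrFun hcross 0
  have hcross₂ := congrFun hcross 2
  simp only [cross_apply, vec3_dotProduct, cons_val_zero, cons_val_one, cons_val_two, tail_cons,
    head_cons, Pi.sub_apply, Pi.smul_apply, smul_eq_mul, Pi.zero_apply] at hcross₀ hcross₂
  subst hα hβ hγ
  simp only [ofReal_neg_im_mul_conj_div, hG]
  rw [dbar_gaussMapComponent h₂ h₃ (by fun_prop) hG0,
    dbar_gaussMapComponent h₃ h₁ (by fun_prop) hG0,
    dbar_gaussMapComponent h₁ h₂ (by fun_prop) hG0, hdG]
  constructor
  · linear_combination -(I / G z ^ 2) * hcross₂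
  · linear_combination -(I / G z ^ 2) * hcross₀
end

section
/- Let α, β, γ ∈ ℝ satisfy α² + β² + γ² = 1 and β² + γ² ≠ 0, and set κ := (αγ + iβ)/(β² + γ²) ∈ ℂ and σ := (αβ − iγ)/(β² + γ²) ∈ ℂ. Then for complex numbers A, B, C, D ∈ ℂ, the system of four equations iA = αB + βC + γD, iB = −αA + γC − βD, iC = −βA − γB + αD, iD = −γA + βB − αC holds if and only if A = −κC + σD and B = σC + κD. -/
open Complex

theorem oneZeroForms_parametrization
    (α β γ : ℝ) (hsph : α ^ 2 + β ^ 2 + γ ^ 2 = 1) (hβγ : β ^ 2 + γ ^ 2 ≠ 0)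
    (κ σ : ℂ)
    (hκ : κ = (((α * γ : ℝ) : ℂ) + Complex.I * ((β : ℝ) : ℂ)) / (((β ^ 2 + γ ^ 2 : ℝ)) : ℂ))
    (hσ : σ = (((α * β : ℝ) : ℂ) - Complex.I * ((γ : ℝ) : ℂ)) / (((β ^ 2 + γ ^ 2 : ℝ)) : ℂ))
    (A B C D : ℂ) :
    (Complex.I * A = (α : ℂ) * B + (β : ℂ) * C + (γ : ℂ) * D ∧
     Complex.I * B = -(α : ℂ) * A + (γ : ℂ) * C - (β : ℂ) * D ∧
     Complex.I * C = -(β : ℂ) * A - (γ : ℂ) * B + (α : ℂ) * D ∧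
     Complex.I * D = -(γ : ℂ) * A + (β : ℂ) * B - (α : ℂ) * C)
    ↔ (A = -κ * C + σ * D ∧ B = σ * C + κ * D) := by
  have hd : ((β ^ 2 + γ ^ 2 : ℝ) : ℂ) ≠ 0 := by exact_mod_cast hβγ
  have hd' : (β : ℂ) ^ 2 + (γ : ℂ) ^ 2 ≠ 0 := by push_cast at hd; exact hd
  have hsphC : (α : ℂ) ^ 2 + (β : ℂ) ^ 2 + (γ : ℂ) ^ 2 = 1 := by exact_mod_cast hsph
  subst hκ hσ
  push_cast
  constructor
  · rintro ⟨h1, h2, h3, h4⟩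
    constructor
    · field_simp [hd']
      linear_combination (β : ℂ) * h3 + (γ : ℂ) * h4
    · field_simp [hd']
      linear_combination (γ : ℂ) * h3 - (β : ℂ) * h4
  · rintro ⟨hA, hB⟩
    subst hA hB
    refine ⟨?_, ?_, ?_, ?_⟩
    · field_simp [hd']
      linear_combination (-((β:ℂ)*C+(γ:ℂ)*D)) * hsphC - (((β:ℂ)*C+(γ:ℂ)*D)) * Complex.I_sq
    · field_simp [hd']
      linear_combination (-((γ:ℂ)*C-(β:ℂ)*D)) * hsphC - (((γ:ℂ)*C-(β:ℂ)*D)) * Complex.I_sq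
    · field_simp [hd']
      ring
    · field_simp [hd']
      ring
end
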